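/- Suppose L : ℝᵈ → ℝ satisfies the local restricted strong convexity L(b⁰ + Δ) − L(b⁰) − ⟨∇L(b⁰), Δ⟩ ≥ τ₁‖Δ‖² − τ₂ for all Δ with ‖Δ‖ ≤ β, where τ₁ > 0, τ₂ ≥ 0. If additionally ‖∇L(b⁰)‖ ≤ λ/4 (dual norm bound taken as Euclidean here) and Δ̂ satisfies ⟨∇L(b⁰ + Δ̂) , Δ̂⟩ ≤ 0 with ‖Δ̂‖ ≤ β for a convex L, then τ₁‖Δ̂‖² ≤ (λ/4)‖Δ̂‖ + τ₂, and hence ‖Δ̂‖ ≤ (λ/(8τ₁)) + √(τ₂/τ₁ + λ²/(64τ₁²)). -/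

import Mathlib

/-!
Convexity along the segment from `b⁰` to `b⁰ + Δ̂` bounds the increment `L(b⁰ + Δ̂) - L(b⁰)` by
the derivative at the far endpoint, which the stationarity condition makes nonpositive. Inserting
this and Cauchy–Schwarz for `⟨∇L(b⁰), Δ̂⟩` into restricted strong convexity gives the quadratic
inequality `τ₁ x² ≤ (λ/4) x + τ₂` for `x = ‖Δ̂‖`, and `x` is at most the larger root.
-/

open Set

theorem ConvexOn.sub_le_of_hasFDerivAt_add {E : Type*} [NormedAddCommGroup E] [NormedSpace ℝ E]
    {s : Set E} {f : E → ℝ} {f' : E →L[ℝ] ℝ} {x v : E} (hf : ConvexOn ℝ s f) (hx : x ∈ s)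
    (hxv : x + v ∈ s) (hf' : HasFDerivAt f f' (x + v)) :
    f (x + v) - f x ≤ f' v := by
  let φ : ℝ →ᵃ[ℝ] E := AffineMap.lineMap x (x + v)
  have hconv : ConvexOn ℝ (φ ⁻¹' s) (f ∘ φ) := hf.comp_affineMap φ
  have hline : HasDerivAt φ v 1 := by
    simpa using AffineMap.hasDerivAt_lineMap (a := x) (b := x + v) (x := (1 : ℝ))
  have hderiv : HasDerivAt (f ∘ φ) (f' v) 1 :=
    (by simpa [φ] using hf' : HasFDerivAt f f' (φ 1)).comp_hasDerivAt 1 hline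
  have hslope := hconv.slope_le_of_hasDerivAt (x := 0) (y := 1) (by simpa [φ] using hx)
    (by simpa [φ] using hxv) zero_lt_one hderiv
  simpa [slope, φ] using hslope

theorem ConvexOn.sub_le_inner_of_hasGradientAt_add {E : Type*} [NormedAddCommGroup E]
    [InnerProductSpace ℝ E] [CompleteSpace E] {s : Set E} {f : E → ℝ} {g x v : E}
    (hf : ConvexOn ℝ s f) (hx : x ∈ s) (hxv : x + v ∈ s) (hg : HasGradientAt f g (x + v)) :
    f (x + v) - f x ≤ inner ℝ g v := by
  simpa using hf.sub_le_of_hasFDerivAt_add hx hxv hg.hasFDerivAt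

theorem le_div_add_sqrt_of_mul_sq_le {a b c x : ℝ} (ha : 0 < a) (h : a * x ^ 2 ≤ b * x + c) :
    x ≤ b / (2 * a) + √(c / a + (b / (2 * a)) ^ 2) := by
  have hsq : (x - b / (2 * a)) ^ 2 ≤ c / a + (b / (2 * a)) ^ 2 := by
    have hgap : c / a + (b / (2 * a)) ^ 2 - (x - b / (2 * a)) ^ 2 =
        (b * x + c - a * x ^ 2) / a := by
      field_simp
      ring
    linarith [div_nonneg (sub_nonneg.2 h) ha.le]
  linarith [Real.le_sqrt_of_sq_le hsq]

theorem lrsc_error_bound_general {d : ℕ}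
    (L : EuclideanSpace ℝ (Fin d) → ℝ)
    (b0 Δhat : EuclideanSpace ℝ (Fin d))
    (τ₁ τ₂ β lam : ℝ)
    (hτ₁ : 0 < τ₁)
    (hconvex : ConvexOn ℝ Set.univ L)
    (hdiff : Differentiable ℝ L)
    (hlrsc : ∀ Δ : EuclideanSpace ℝ (Fin d), ‖Δ‖ ≤ β →
      L (b0 + Δ) - L b0 - inner ℝ (gradient L b0) Δ ≥ τ₁ * ‖Δ‖ ^ 2 - τ₂)
    (hgrad : ‖gradient L b0‖ ≤ lam / 4)
    (hstat : inner ℝ (gradient L (b0 + Δhat)) Δhat ≤ (0:ℝ))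
    (hball : ‖Δhat‖ ≤ β) :
    τ₁ * ‖Δhat‖ ^ 2 ≤ (lam / 4) * ‖Δhat‖ + τ₂ ∧
      ‖Δhat‖ ≤ lam / (8 * τ₁) + Real.sqrt (τ₂ / τ₁ + lam ^ 2 / (64 * τ₁ ^ 2)) := by
  have hdescent : L (b0 + Δhat) - L b0 ≤ 0 :=
    (hconvex.sub_le_inner_of_hasGradientAt_add (mem_univ _) (mem_univ _)
      (hdiff _).hasGradientAt).trans hstat
  have hcauchy : -inner ℝ (gradient L b0) Δhat ≤ lam / 4 * ‖Δhat‖ :=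
    calc -inner ℝ (gradient L b0) Δhat ≤ ‖gradient L b0‖ * ‖Δhat‖ :=
          (neg_le_abs _).trans (abs_real_inner_le_norm _ _)
      _ ≤ lam / 4 * ‖Δhat‖ := by gcongr
  have hquad : τ₁ * ‖Δhat‖ ^ 2 ≤ lam / 4 * ‖Δhat‖ + τ₂ := by
    linarith [hlrsc Δhat hball]
  refine ⟨hquad, ?_⟩
  calc ‖Δhat‖ ≤ lam / 4 / (2 * τ₁) + √(τ₂ / τ₁ + (lam / 4 / (2 * τ₁)) ^ 2) :=
        le_div_add_sqrt_of_mul_sq_le hτ₁ hquad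
    _ = lam / (8 * τ₁) + √(τ₂ / τ₁ + lam ^ 2 / (64 * τ₁ ^ 2)) := by ring_nf

theorem lrsc_error_bound {d : ℕ}
    (L : EuclideanSpace ℝ (Fin d) → ℝ)
    (b0 Δhat : EuclideanSpace ℝ (Fin d))
    (τ₁ τ₂ β lam : ℝ)
    (hτ₁ : 0 < τ₁) (hτ₂ : 0 ≤ τ₂) (hβ : 0 < β)
    (hconvex : ConvexOn ℝ Set.univ L)
    (hdiff : Differentiable ℝ L)
    (hlrsc : ∀ Δ : EuclideanSpace ℝ (Fin d), ‖Δ‖ ≤ β →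
      L (b0 + Δ) - L b0 - inner ℝ (gradient L b0) Δ ≥ τ₁ * ‖Δ‖ ^ 2 - τ₂)
    (hgrad : ‖gradient L b0‖ ≤ lam / 4)
    (hstat : inner ℝ (gradient L (b0 + Δhat)) Δhat ≤ (0:ℝ))
    (hball : ‖Δhat‖ ≤ β) :
    τ₁ * ‖Δhat‖ ^ 2 ≤ (lam / 4) * ‖Δhat‖ + τ₂ ∧
      ‖Δhat‖ ≤ lam / (8 * τ₁) + Real.sqrt (τ₂ / τ₁ + lam ^ 2 / (64 * τ₁ ^ 2)) :=
  lrsc_error_bound_general L b0 Δhat τ₁ τ₂ β lam hτ₁ hconvex hdiff hlrsc hgrad hstat hball
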